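/- Let p be a prime and let 1 → A → B →(λ) C → 1 be a split short exact sequence with section σ : C → B such that B is a p-almost direct product of A and C. Define the set map τ : B → B by τ(b) = (σ(λ(b)))⁻¹ · b. Then for every n ≥ 1 one has τ(γ_n^p B) ⊆ γ_n^p A. -/

import Mathlib

/-!
Put `A = ker f` and let `Kₙ ≤ B` be the image of `γₙᵖ A`. The hypothesis says that `B` acts
trivially on `K₁/K₂`; with the three subgroups lemma and `[xᵖ, y] ≡ [x, y]ᵖ` this propagates to
`[B, Kₙ] ≤ Kₙ₊₁`, so `(Kₙ)` is a `p`-central series of `B`, and then `[s(γᵢᵖ C), Kⱼ] ≤ K_{i+j}`.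
Hence the subgroups `Lₙ = s(γₙᵖ C) ⊔ Kₙ = s(γₙᵖ C) · Kₙ` satisfy `L₁ = B`, `[B, Lₙ] ≤ Lₙ₊₁` and
`Lₙᵖ ⊆ Lₙ₊₁`, so they contain `γₙᵖ B`; and `τ (s c * k) = k`.
-/

open scoped commutatorElement

/-- The lower `F_p`-linear central filtration `(γₙᵖ G)ₙ` of a group `G`:
`gammaP p 1 = ⊤` (i.e. `γ₁ᵖ G = G`) and `γ_{n+1}ᵖ G` is the subgroup generated by
`[G, γₙᵖ G] ∪ {xᵖ : x ∈ γₙᵖ G}`.  (The value at `0` is junk, set to `⊤`.) -/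
def gammaP (p : ℕ) {G : Type*} [Group G] : ℕ → Subgroup G
  | 0 => ⊤
  | 1 => ⊤
  | n + 2 =>
    Subgroup.closure
      ({x : G | ∃ g y : G, y ∈ gammaP p (n + 1) ∧ x = ⁅g, y⁆} ∪
       {x : G | ∃ y : G, y ∈ gammaP p (n + 1) ∧ x = y ^ p})

open Subgroup

section Commutator

variable {G : Type*} [Group G]

theorem Subgroup.commutator_commutator_le_of_rotate {H₁ H₂ H₃ N : Subgroup G} [N.Normal]
    (h1 : ⁅⁅H₂, H₃⁆, H₁⁆ ≤ N) (h2 : ⁅⁅H₃, H₁⁆, H₂⁆ ≤ N) : ⁅⁅H₁, H₂⁆, H₃⁆ ≤ N := by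
  rw [← QuotientGroup.ker_mk' N, ← map_eq_bot_iff, map_commutator, map_commutator] at h1 h2 ⊢
  exact commutator_commutator_eq_bot_of_rotate h1 h2

theorem Subgroup.commutator_closure_le {S : Set G} {K N : Subgroup G} [N.Normal]
    (h : ∀ x ∈ S, ∀ k ∈ K, ⁅x, k⁆ ∈ N) : ⁅closure S, K⁆ ≤ N := by
  rw [← QuotientGroup.ker_mk' N, ← map_eq_bot_iff, map_commutator,
    commutator_eq_bot_iff_le_centralizer, MonoidHom.map_closure, closure_le]
  rintro _ ⟨x, hx, rfl⟩ _ ⟨k, hk, rfl⟩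
  rw [← commutatorElement_eq_one_iff_mul_comm, ← map_commutatorElement, ← MonoidHom.mem_ker,
    QuotientGroup.ker_mk', ← commutatorElement_inv, inv_mem_iff]
  exact h x hx k hk

theorem Commute.commutatorElement_pow_left {x y : G} (h : Commute x ⁅x, y⁆) (n : ℕ) :
    ⁅x ^ n, y⁆ = ⁅x, y⁆ ^ n := by
  induction n with
  | zero => simp
  | succ n ih =>
    rw [pow_succ', commutatorElement_mul_left_eq_conj_mul, ih, (h.pow_right n).eq,
      mul_inv_cancel_right, pow_succ]

theorem commutatorElement_pow_left_mem {N : Subgroup G} [N.Normal] {x y : G} (n : ℕ)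
    (h : ⁅x, ⁅x, y⁆⁆ ∈ N) (hn : ⁅x, y⁆ ^ n ∈ N) : ⁅x ^ n, y⁆ ∈ N := by
  rw [← QuotientGroup.ker_mk' N, MonoidHom.mem_ker] at h hn ⊢
  rw [map_commutatorElement, map_commutatorElement] at h
  rw [map_commutatorElement, map_pow,
    (commutatorElement_eq_one_iff_commute.mp h).commutatorElement_pow_left,
    ← map_commutatorElement, ← map_pow, hn]

theorem inv_pow_mul_mul_pow_mem {N : Subgroup G} [N.Normal] {x y : G} (n : ℕ)
    (h : ⁅x, y⁆ ∈ N) (hn : y ^ n ∈ N) : (x ^ n)⁻¹ * (x * y) ^ n ∈ N := by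
  rw [← QuotientGroup.ker_mk' N, MonoidHom.mem_ker] at h hn ⊢
  rw [map_commutatorElement, commutatorElement_eq_one_iff_commute] at h
  rw [map_mul, map_inv, map_pow, map_pow, map_mul, h.mul_pow, ← map_pow _ y, hn, mul_one,
    inv_mul_cancel]

end Commutator

section gammaP

variable {p : ℕ} {G H : Type*} [Group G] [Group H]

theorem commutatorElement_mem_gammaP_succ (g : G) {n : ℕ} {y : G} (hy : y ∈ gammaP p n) :
    ⁅g, y⁆ ∈ gammaP p (n + 1) := by
  cases n with
  | zero => trivial
  | succ n => exact subset_closure (Or.inl ⟨g, y, hy, rfl⟩)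

theorem pow_mem_gammaP_succ {n : ℕ} {y : G} (hy : y ∈ gammaP p n) :
    y ^ p ∈ gammaP p (n + 1) := by
  cases n with
  | zero => trivial
  | succ n => exact subset_closure (Or.inr ⟨y, hy, rfl⟩)

theorem gammaP_succ_le {F : ℕ → Subgroup G} (h₁ : F 1 = ⊤)
    (hcomm : ∀ n, ⁅(⊤ : Subgroup G), F (n + 1)⁆ ≤ F (n + 2))
    (hpow : ∀ n, ∀ y ∈ F (n + 1), y ^ p ∈ F (n + 2)) :
    ∀ n, gammaP p (n + 1) ≤ F (n + 1)
  | 0 => h₁.ge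
  | n + 1 => (closure_le _).mpr <| by
    rintro _ (⟨g, y, hy, rfl⟩ | ⟨y, hy, rfl⟩)
    · exact commutator_le.mp (hcomm n) g trivial y (gammaP_succ_le h₁ hcomm hpow n hy)
    · exact hpow n y (gammaP_succ_le h₁ hcomm hpow n hy)

theorem map_gammaP_le (φ : G →* H) (n : ℕ) : (gammaP p n).map φ ≤ gammaP p n := by
  rw [map_le_iff_le_comap]
  cases n with
  | zero => exact le_top
  | succ n =>
    refine gammaP_succ_le (F := fun n ↦ (gammaP p n).comap φ) (comap_top φ)
      (fun n ↦ commutator_le.mpr fun g _ y hy ↦ ?_) (fun n y hy ↦ ?_) n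
    · rw [mem_comap, map_commutatorElement]
      exact commutatorElement_mem_gammaP_succ _ hy
    · rw [mem_comap, map_pow]
      exact pow_mem_gammaP_succ hy

instance gammaP_normal (n : ℕ) : (gammaP p n : Subgroup G).Normal where
  conj_mem y hy g := map_gammaP_le (MulAut.conj g).toMonoidHom n ⟨y, hy, rfl⟩

end gammaP

structure IsPCentralSeries (p : ℕ) {G : Type*} [Group G] (F : ℕ → Subgroup G) : Prop where
  normal : ∀ n, (F n).Normal
  commutator_le : ∀ n, ⁅(⊤ : Subgroup G), F n⁆ ≤ F (n + 1)
  pow_mem : ∀ n, ∀ x ∈ F n, x ^ p ∈ F (n + 1)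

namespace IsPCentralSeries

variable {p : ℕ} {G C : Type*} [Group G] [Group C] {F : ℕ → Subgroup G}

theorem commutatorElement_mem (hF : IsPCentralSeries p F) (g : G) {n : ℕ} {x : G}
    (hx : x ∈ F n) : ⁅g, x⁆ ∈ F (n + 1) :=
  Subgroup.commutator_le.mp (hF.commutator_le n) g trivial x hx

theorem commutator_map_gammaP_le (hF : IsPCentralSeries p F) (s : C →* G) (i j : ℕ) :
    ⁅(gammaP p (i + 1)).map s, F j⁆ ≤ F (i + j + 1) := by
  induction i generalizing j with
  | zero => simpa using (commutator_mono le_top le_rfl).trans (hF.commutator_le j)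
  | succ i ih =>
    rw [show i + 1 + j + 1 = i + j + 2 by omega]
    have := hF.normal (i + j + 2)
    refine (MonoidHom.map_closure s _).symm ▸ commutator_closure_le ?_
    rintro _ ⟨c, ⟨d, e, he, rfl⟩ | ⟨e, he, rfl⟩, rfl⟩ x hx
    · rw [map_commutatorElement]
      refine commutator_commutator_le_of_rotate (H₁ := ⊤) ?_ ?_
        (commutator_mem_commutator (commutator_mem_commutator trivial (mem_map_of_mem s he)) hx)
      · rw [commutator_comm _ ⊤]
        exact (commutator_mono le_rfl (ih j)).trans (hF.commutator_le _)
      · rw [commutator_comm (F j), commutator_comm _ ((gammaP p (i + 1)).map s)]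
        exact (commutator_mono le_rfl (hF.commutator_le j)).trans (ih (j + 1))
    · rw [map_pow]
      have hex : ⁅s e, x⁆ ∈ F (i + j + 1) :=
        Subgroup.commutator_le.mp (ih j) _ (mem_map_of_mem s he) x hx
      exact commutatorElement_pow_left_mem p (hF.commutatorElement_mem _ hex)
        (hF.pow_mem _ _ hex)

end IsPCentralSeries

section gammaP

variable {p : ℕ} {G : Type*} [Group G]

theorem isPCentralSeries_gammaP : IsPCentralSeries p (gammaP p : ℕ → Subgroup G) where
  normal := gammaP_normal
  commutator_le _ := commutator_le.mpr fun g _ _ hy ↦ commutatorElement_mem_gammaP_succ g hy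
  pow_mem _ _ := pow_mem_gammaP_succ

theorem commutator_gammaP_le (i j : ℕ) :
    ⁅(gammaP p (i + 1) : Subgroup G), (gammaP p j : Subgroup G)⁆ ≤ gammaP p (i + j + 1) := by
  simpa using isPCentralSeries_gammaP.commutator_map_gammaP_le (MonoidHom.id G) i j

end gammaP

section gammaPIn

variable {p : ℕ} {B : Type*} [Group B]

def gammaPIn (p : ℕ) (A : Subgroup B) (n : ℕ) : Subgroup B :=
  (gammaP p n : Subgroup A).map A.subtype

variable {A : Subgroup B}

theorem gammaPIn_one : gammaPIn p A 1 = A :=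
  (MonoidHom.range_eq_map _).symm.trans A.range_subtype

theorem pow_mem_gammaPIn_succ {n : ℕ} {x : B} (hx : x ∈ gammaPIn p A n) :
    x ^ p ∈ gammaPIn p A (n + 1) := by
  obtain ⟨a, ha, rfl⟩ := hx
  exact ⟨a ^ p, pow_mem_gammaP_succ ha, map_pow _ _ _⟩

theorem commutator_gammaPIn_le (i j : ℕ) :
    ⁅gammaPIn p A (i + 1), gammaPIn p A j⁆ ≤ gammaPIn p A (i + j + 1) :=
  map_commutator _ _ A.subtype ▸ map_mono (commutator_gammaP_le i j)

variable [A.Normal]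

instance gammaPIn_normal (n : ℕ) : (gammaPIn p A n).Normal where
  conj_mem := by
    rintro _ ⟨a, ha, rfl⟩ b
    exact ⟨MulAut.conjNormal b a, map_gammaP_le (MulAut.conjNormal b).toMonoidHom n
      (mem_map_of_mem _ ha), MulAut.conjNormal_apply b a⟩

theorem commutator_top_gammaPIn_le (h : ⁅(⊤ : Subgroup B), A⁆ ≤ gammaPIn p A 2) :
    ∀ n, ⁅(⊤ : Subgroup B), gammaPIn p A n⁆ ≤ gammaPIn p A (n + 1)
  | 0 => by
    -- `gammaP p 0 = gammaP p 1 = ⊤`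
    change ⁅⊤, gammaPIn p A 1⁆ ≤ _
    rw [gammaPIn_one]
    exact commutator_le_right ⊤ A
  | 1 => by rw [gammaPIn_one]; exact h
  | n + 2 => by
    have ih := commutator_top_gammaPIn_le h (n + 1)
    have hA1 : ⁅gammaPIn p A 1, gammaPIn p A (n + 2)⁆ ≤ gammaPIn p A (n + 3) :=
      (commutator_gammaPIn_le 0 (n + 2)).trans_eq (by rw [zero_add])
    rw [commutator_comm, gammaPIn, gammaP, MonoidHom.map_closure]
    refine commutator_closure_le ?_
    rintro _ ⟨_, ⟨a, y, hy, rfl⟩ | ⟨y, hy, rfl⟩, rfl⟩ b -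
    · rw [map_commutatorElement]
      refine commutator_commutator_le_of_rotate (H₁ := gammaPIn p A 1) ?_ ?_
        (commutator_mem_commutator (commutator_mem_commutator ⟨a, trivial, rfl⟩
          (mem_map_of_mem _ hy)) (mem_top b))
      · rw [commutator_comm _ ⊤, commutator_comm _ (gammaPIn p A 1)]
        exact (commutator_mono le_rfl ih).trans hA1
      · refine (commutator_mono (commutator_top_gammaPIn_le h 1) le_rfl).trans ?_
        exact (commutator_gammaPIn_le 1 (n + 1)).trans_eq
          (by rw [show 1 + (n + 1) + 1 = n + 3 by omega])
    · have hyb : ⁅A.subtype y, b⁆ ∈ gammaPIn p A (n + 2) := by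
        rw [← commutatorElement_inv, inv_mem_iff]
        exact commutator_le.mp ih b trivial _ (mem_map_of_mem _ hy)
      rw [map_pow]
      exact commutatorElement_pow_left_mem p
        (commutator_le.mp hA1 _ ⟨y, trivial, rfl⟩ _ hyb) (pow_mem_gammaPIn_succ hyb)

theorem isPCentralSeries_gammaPIn (h : ⁅(⊤ : Subgroup B), A⁆ ≤ gammaPIn p A 2) :
    IsPCentralSeries p (gammaPIn p A) where
  normal := gammaPIn_normal
  commutator_le := commutator_top_gammaPIn_le h
  pow_mem _ _ := pow_mem_gammaPIn_succ

end gammaPIn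

section Splitting

variable {p : ℕ} {B C : Type*} [Group B] [Group C] {f : B →* C} {s : C →* B}

theorem section_inv_mul_mem_ker (hs : ∀ c, f (s c) = c) (b : B) : (s (f b))⁻¹ * b ∈ f.ker := by
  rw [MonoidHom.mem_ker, map_mul, map_inv, hs, inv_mul_cancel]

theorem commutator_top_ker_le (hs : ∀ c, f (s c) = c)
    (hadp : ∀ a ∈ f.ker, ∀ c, s c * a * (s c)⁻¹ * a⁻¹ ∈ gammaPIn p f.ker 2) :
    ⁅(⊤ : Subgroup B), f.ker⁆ ≤ gammaPIn p f.ker 2 := by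
  refine commutator_le.mpr fun g _ a ha ↦ ?_
  have hK1 : ∀ {x}, x ∈ f.ker → x ∈ gammaPIn p f.ker 1 := fun hx ↦ gammaPIn_one.ge hx
  rw [← mul_inv_cancel_left (s (f g)) g, commutatorElement_mul_left_eq_conj_mul]
  refine mul_mem ((gammaPIn_normal 2).conj_mem _ ?_ _) (hadp a ha (f g))
  exact commutator_le.mp (commutator_gammaPIn_le 0 1) _ (hK1 (section_inv_mul_mem_ker hs g)) _
    (hK1 ha)

theorem map_gammaP_one_sup_gammaPIn_one_eq_top (hs : ∀ c, f (s c) = c) :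
    (gammaP p 1).map s ⊔ gammaPIn p f.ker 1 = ⊤ := by
  refine eq_top_iff.mpr fun b _ ↦ mul_inv_cancel_left (s (f b)) b ▸ mul_mem ?_ ?_
  · exact mem_sup_left (mem_map_of_mem s trivial)
  · exact mem_sup_right (gammaPIn_one.ge (section_inv_mul_mem_ker hs b))

theorem commutator_top_map_gammaP_sup_gammaPIn_le (hs : ∀ c, f (s c) = c)
    (hK : IsPCentralSeries p (gammaPIn p f.ker)) (n : ℕ) :
    ⁅(⊤ : Subgroup B), (gammaP p (n + 1)).map s ⊔ gammaPIn p f.ker (n + 1)⁆ ≤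
      (gammaP p (n + 2)).map s ⊔ gammaPIn p f.ker (n + 2) := by
  refine commutator_le.mpr fun g _ y hy ↦ ?_
  obtain ⟨_, ⟨c, hc, rfl⟩, k, hk, rfl⟩ := mem_sup_of_normal_right.mp hy
  set u := s (f g)
  have hxc : ⁅u⁻¹ * g, s c⁆ ∈ gammaPIn p f.ker (n + 2) := by
    rw [← commutatorElement_inv, inv_mem_iff]
    exact commutator_le.mp (hK.commutator_map_gammaP_le s n 1) _ (mem_map_of_mem s hc) _
      (gammaPIn_one.ge (section_inv_mul_mem_ker hs g))
  have key : ⁅g, s c * k⁆ =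
      (u * ⁅u⁻¹ * g, s c⁆ * u⁻¹) * ⁅u, s c⁆ * (s c * ⁅g, k⁆ * (s c)⁻¹) := by
    group
  rw [key, ← map_commutatorElement]
  refine mul_mem (mul_mem (mem_sup_right ?_) (mem_sup_left ?_)) (mem_sup_right ?_)
  · exact (gammaPIn_normal _).conj_mem _ hxc _
  · exact mem_map_of_mem s (commutatorElement_mem_gammaP_succ _ hc)
  · exact (gammaPIn_normal _).conj_mem _ (hK.commutatorElement_mem g hk) _

theorem pow_mem_map_gammaP_sup_gammaPIn (hK : IsPCentralSeries p (gammaPIn p f.ker)) {n : ℕ} {y : B}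
    (hy : y ∈ (gammaP p (n + 1)).map s ⊔ gammaPIn p f.ker (n + 1)) :
    y ^ p ∈ (gammaP p (n + 2)).map s ⊔ gammaPIn p f.ker (n + 2) := by
  obtain ⟨_, ⟨c, hc, rfl⟩, k, hk, rfl⟩ := mem_sup_of_normal_right.mp hy
  rw [← mul_inv_cancel_left (s c ^ p) ((s c * k) ^ p)]
  refine mul_mem (mem_sup_left ?_) (mem_sup_right ?_)
  · exact map_pow s c p ▸ mem_map_of_mem s (pow_mem_gammaP_succ hc)
  · exact inv_pow_mul_mul_pow_mem p (hK.commutatorElement_mem _ hk) (hK.pow_mem _ _ hk)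

end Splitting

theorem statement3_general (p : ℕ)
    {B C : Type*} [Group B] [Group C]
    (f : B →* C)
    (s : C →* B) (hs : ∀ c, f (s c) = c)
    (hadp : ∀ a ∈ f.ker, ∀ c : C,
      s c * a * (s c)⁻¹ * a⁻¹ ∈ (gammaP p 2 : Subgroup ↥f.ker).map f.ker.subtype)
    (τ : B → B) (hτ : ∀ b, τ b = (s (f b))⁻¹ * b) :
    ∀ n : ℕ, 1 ≤ n → ∀ b ∈ (gammaP p n : Subgroup B),
      τ b ∈ (gammaP p n : Subgroup ↥f.ker).map f.ker.subtype := by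
  intro n hn b hb
  obtain ⟨n, rfl⟩ := Nat.exists_eq_add_of_le' hn
  have hK := isPCentralSeries_gammaPIn (commutator_top_ker_le hs hadp)
  have hγ := gammaP_succ_le (F := fun n ↦ (gammaP p n).map s ⊔ gammaPIn p f.ker n)
    (map_gammaP_one_sup_gammaPIn_one_eq_top hs)
    (commutator_top_map_gammaP_sup_gammaPIn_le hs hK)
    (fun _ _ ↦ pow_mem_map_gammaP_sup_gammaPIn hK) n
  obtain ⟨_, ⟨c, -, rfl⟩, k, hk, rfl⟩ := mem_sup_of_normal_right.mp (hγ hb)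
  rw [hτ, map_mul, hs, MonoidHom.mem_ker.mp (map_subtype_le _ hk), mul_one, inv_mul_cancel_left]
  exact hk

/-- If `B` is a `p`-almost direct product of `A = ker f` and `C` (with section `s`), and
`τ : B → B` is defined by `τ(b) = (s(f(b)))⁻¹ * b`, then `τ(γₙᵖ B) ⊆ γₙᵖ A` for all `n ≥ 1`. -/
theorem statement3 (p : ℕ) (hp : p.Prime)
    {B C : Type*} [Group B] [Group C]
    (f : B →* C) (hf : Function.Surjective f)
    (s : C →* B) (hs : ∀ c, f (s c) = c)
    (hadp : ∀ a ∈ f.ker, ∀ c : C,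
      s c * a * (s c)⁻¹ * a⁻¹ ∈ (gammaP p 2 : Subgroup ↥f.ker).map f.ker.subtype)
    (τ : B → B) (hτ : ∀ b, τ b = (s (f b))⁻¹ * b) :
    ∀ n : ℕ, 1 ≤ n → ∀ b ∈ (gammaP p n : Subgroup B),
      τ b ∈ (gammaP p n : Subgroup ↥f.ker).map f.ker.subtype :=
  statement3_general p f s hs hadp τ hτ
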